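/- For every tree T and subtree S of T, ζ_1(S) ≤ ζ_1(T). -/

import Mathlib

open scoped Classical
open Finset

variable {V : Type*}

/-- External vertex boundary: vertices outside `S` adjacent to some vertex of `S`. -/
noncomputable def vBoundary [Fintype V] (G : SimpleGraph V) (S : Finset V) : Finset V :=
  Finset.univ.filter fun v => v ∉ S ∧ ∃ u ∈ S, G.Adj u v

/-- Vertex isoperimetric number `Φ_V(G,k)`. -/
noncomputable def PhiV [Fintype V] (G : SimpleGraph V) (k : ℕ) : ℕ :=
  sInf {m | ∃ S : Finset V, S.card = k ∧ (vBoundary G S).card = m}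

/-- Number of edges with exactly one endpoint in `S`. -/
noncomputable def edgeBoundaryCard [Fintype V] (G : SimpleGraph V) (S : Finset V) : ℕ :=
  (Finset.univ.filter fun p : V × V => p.1 ∈ S ∧ p.2 ∉ S ∧ G.Adj p.1 p.2).card

/-- Edge isoperimetric number `Φ_E(G,k)`. -/
noncomputable def PhiE [Fintype V] (G : SimpleGraph V) (k : ℕ) : ℕ :=
  sInf {m | ∃ S : Finset V, S.card = k ∧ edgeBoundaryCard G S = m}

/-- Vertex isoperimetric peak `Φ_V(G)`. -/
noncomputable def PhiVPeak [Fintype V] (G : SimpleGraph V) : ℕ :=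
  (Finset.Icc 1 (Fintype.card V)).sup (PhiV G)

/-- Edge isoperimetric peak `Φ_E(G)`. -/
noncomputable def PhiEPeak [Fintype V] (G : SimpleGraph V) : ℕ :=
  (Finset.Icc 1 (Fintype.card V)).sup (PhiE G)

/-- The h-index of a function `f : ℕ → ℕ`: the largest `h` such that `f k ≥ h`
for `h` consecutive values `k1 ≤ k ≤ k1 + h - 1`. -/
noncomputable def hIndex (f : ℕ → ℕ) : ℕ :=
  sSup {h : ℕ | ∃ k1 : ℕ, ∀ k, k1 ≤ k → k < k1 + h → h ≤ f k}
/-- Closed neighborhood of `v` as a finset. -/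
noncomputable def closedNbr [Fintype V] (G : SimpleGraph V) (v : V) : Finset V :=
  insert v (Finset.univ.filter (G.Adj v))

/-- A robber walk: at each time step the robber stays put or moves to a neighbor. -/
def IsRWalk [Fintype V] (G : SimpleGraph V) (w : ℕ → V) : Prop :=
  ∀ t, w (t + 1) ∈ closedNbr G (w t)

/-- The history of answer vectors produced when the cops use strategy `σ`
(with `k` cops and answer function `A`) against the robber walk `w`:
`hist A σ w t` is the list of the first `t` answer vectors. In round `t` the
cops probe `σ` applied to the history so far, and each probe at `u` returns
`A u r` where `r` is the robber's current position. -/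
noncomputable def hist [Fintype V] {α : Type*} (A : V → V → α) {k : ℕ}
    (σ : List (Fin k → α) → (Fin k → V)) (w : ℕ → V) : ℕ → List (Fin k → α)
  | 0 => []
  | t + 1 => hist A σ w t ++ [fun i => A (σ (hist A σ w t) i) (w t)]

/-- The cop strategy `σ` wins the localization-type game with answer function `A`:
against every robber walk, at some round the answer history uniquely determines
the robber's current vertex. -/
def WinsLoc [Fintype V] {α : Type*} (G : SimpleGraph V) (A : V → V → α) (k : ℕ)
    (σ : List (Fin k → α) → (Fin k → V)) : Prop :=
  ∀ w, IsRWalk G w → ∃ t, ∀ w', IsRWalk G w' →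
    hist A σ w' (t + 1) = hist A σ w (t + 1) → w' t = w t

/-- The least number of cops winning the localization-type game with answer
function `A`. -/
noncomputable def locNum [Fintype V] {α : Type*} (G : SimpleGraph V)
    (A : V → V → α) : ℕ :=
  sInf {k | ∃ σ : List (Fin k → α) → (Fin k → V), WinsLoc G A k σ}

/-- One-visibility answer: `0` if the probe is on the robber, `1` if adjacent,
and no information (`none`, i.e. `∗`) otherwise. -/
noncomputable def ans1 [Fintype V] (G : SimpleGraph V) (u r : V) : Option ℕ :=
  if u = r then some 0 else if G.Adj u r then some 1 else none

/-- The one-visibility localization number `ζ₁(G)`. -/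
noncomputable def zeta1 [Fintype V] (G : SimpleGraph V) : ℕ :=
  locNum G (ans1 G)

/-- The localization number `ζ(G)`: probes return exact distances. -/
noncomputable def zeta [Fintype V] (G : SimpleGraph V) : ℕ :=
  locNum G G.dist

/-- The cop strategy `σ` wins the one-proximity game: against every robber walk
some probe eventually returns a distance other than `∗`. -/
def WinsProx [Fintype V] (G : SimpleGraph V) (k : ℕ)
    (σ : List (Fin k → Option ℕ) → (Fin k → V)) : Prop :=
  ∀ w, IsRWalk G w → ∃ t i, ans1 G (σ (hist (ans1 G) σ w t) i) (w t) ≠ none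

/-- The one-proximity number `prox₁(G)`. -/
noncomputable def proxNum [Fintype V] (G : SimpleGraph V) : ℕ :=
  sInf {k | ∃ σ : List (Fin k → Option ℕ) → (Fin k → V), WinsProx G k σ}

/-! Cops on a subtree `S` simulate a winning strategy on `T`: a probe at `u` in `T` is replaced
by a probe at `des u` in `S`. Since `S` is connected and `T` acyclic, a vertex outside `S` has at
most one neighbour in `S`, so the answer at `u` in `T` can be read off the answer at `des u` in
`S`. Against a robber moving inside `S` the cops thus reconstruct the whole history of the game
on `T`, which localizes the robber at the same round. -/

section Simulation

variable {W α β : Type*} {k : ℕ}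

/-- The answer history that the strategy `σ` would have received, when each answer `a` to a
probe of `σ` at `u` is read as `dec u a`. -/
noncomputable def decodeHist (dec : V → α → β) (σ : List (Fin k → β) → Fin k → V)
    (l : List (Fin k → α)) : List (Fin k → β) :=
  l.foldl (fun acc a => acc ++ [fun i => dec (σ acc i) (a i)]) []

lemma decodeHist_append_singleton (dec : V → α → β) (σ : List (Fin k → β) → Fin k → V)
    (l : List (Fin k → α)) (a : Fin k → α) :
    decodeHist dec σ (l ++ [a]) =
      decodeHist dec σ l ++ [fun i => dec (σ (decodeHist dec σ l) i) (a i)] := by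
  simp only [decodeHist, List.foldl_append, List.foldl_cons, List.foldl_nil]

noncomputable def pullbackStrategy (d : V → W) (dec : V → α → β)
    (σ : List (Fin k → β) → Fin k → V) : List (Fin k → α) → Fin k → W :=
  fun l i => d (σ (decodeHist dec σ l) i)

variable [Fintype V] [Fintype W] {G : SimpleGraph W} {H : SimpleGraph V}
  {A : W → W → α} {B : V → V → β}

lemma IsRWalk.map (f : G →g H) {w : ℕ → W} (hw : IsRWalk G w) : IsRWalk H (f ∘ w) := by
  intro t
  have := hw t
  simp only [closedNbr, mem_insert, mem_filter, mem_univ, true_and] at this ⊢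
  exact this.imp (congrArg f) f.map_adj

variable {f : W → V} {d : V → W} {dec : V → α → β}

lemma decodeHist_hist (hdec : ∀ u r, dec u (A (d u) r) = B u (f r))
    (σ : List (Fin k → β) → Fin k → V) (w : ℕ → W) (n : ℕ) :
    decodeHist dec σ (hist A (pullbackStrategy d dec σ) w n) = hist B σ (f ∘ w) n := by
  induction n with
  | zero => rfl
  | succ n ih =>
    simp only [hist, decodeHist_append_singleton, pullbackStrategy, hdec, ih, Function.comp_apply]

lemma WinsLoc.pullback (φ : G →g H) (hφ : Function.Injective φ)
    (hdec : ∀ u r, dec u (A (d u) r) = B u (φ r)) {σ : List (Fin k → β) → Fin k → V}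
    (hσ : WinsLoc H B k σ) : WinsLoc G A k (pullbackStrategy d dec σ) := by
  intro w hw
  obtain ⟨t, ht⟩ := hσ _ (hw.map φ)
  refine ⟨t, fun w' hw' hhist => hφ ?_⟩
  refine ht _ (hw'.map φ) ?_
  rw [← decodeHist_hist hdec, ← decodeHist_hist hdec, hhist]

lemma locNum_le_of_simulation (φ : G →g H) (hφ : Function.Injective φ)
    (hdec : ∀ u r, dec u (A (d u) r) = B u (φ r))
    (hwin : ∃ k, ∃ σ : List (Fin k → β) → Fin k → V, WinsLoc H B k σ) :
    locNum G A ≤ locNum H B := by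
  obtain ⟨σ, hσ⟩ := Nat.sInf_mem hwin
  exact Nat.sInf_le ⟨_, hσ.pullback φ hφ hdec⟩

end Simulation

lemma ans1_eq_zero_iff [Fintype V] (G : SimpleGraph V) {u r : V} :
    ans1 G u r = some 0 ↔ u = r := by
  unfold ans1; split_ifs <;> simp_all

lemma winsLoc_ans1_probe_all [Fintype V] (G : SimpleGraph V) :
    WinsLoc G (ans1 G) (Fintype.card V) fun _ => (Fintype.equivFin V).symm := by
  refine fun w _ => ⟨0, fun w' _ h => ?_⟩
  have h0 := congrFun (List.head_eq_of_cons_eq h) (Fintype.equivFin V (w 0))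
  simp only [Equiv.symm_apply_apply, (ans1_eq_zero_iff G).mpr rfl] at h0
  exact ((ans1_eq_zero_iff G).mp h0).symm

lemma ans1_induce [Fintype V] (G : SimpleGraph V) (s : Set V) [Fintype s] (a b : s) :
    ans1 (G.induce s) a b = ans1 G a b := by
  simp only [ans1, Subtype.ext_iff, SimpleGraph.induce_adj]

/-- A second neighbour would give a path around the edge to the first one, which is a bridge. -/
lemma SimpleGraph.IsAcyclic.eq_of_adj_of_preconnected_induce {T : SimpleGraph V}
    (hT : T.IsAcyclic) {s : Set V} (hconn : (T.induce s).Preconnected) {u x y : V} (hu : u ∉ s)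
    (hx : x ∈ s) (hy : y ∈ s) (hux : T.Adj u x) (huy : T.Adj u y) : x = y := by
  by_contra hxy
  let φ : T.induce s →g T.deleteEdges {s(u, x)} :=
    ⟨Subtype.val, fun {a b} hab => by
      refine SimpleGraph.deleteEdges_adj.mpr ⟨hab, ?_⟩
      simp only [Set.mem_singleton_iff, Sym2.eq_iff, not_or, not_and]
      exact ⟨fun h _ => hu (h ▸ a.2), fun _ h => hu (h ▸ b.2)⟩⟩
  have huy' : (T.deleteEdges {s(u, x)}).Adj u y := by
    refine SimpleGraph.deleteEdges_adj.mpr ⟨huy, ?_⟩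
    simp only [Set.mem_singleton_iff, Sym2.eq_iff]
    rintro (⟨-, rfl⟩ | ⟨rfl, -⟩)
    exacts [hxy rfl, hu hx]
  exact SimpleGraph.isAcyclic_iff_forall_adj_isBridge.mp hT hux
    (huy'.reachable.trans ((hconn ⟨y, hy⟩ ⟨x, hx⟩).map φ))

section Subtree

variable (T : SimpleGraph V) (s : Set V) [Nonempty s]

/-- The map `des` of the paper on `s` and its neighbours; elsewhere its value is arbitrary. -/
noncomputable def des (u : V) : s :=
  if hu : u ∈ s then ⟨u, hu⟩ else Classical.epsilon fun x : s => T.Adj u x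

noncomputable def decodeAns1 (u : V) (a : Option ℕ) : Option ℕ :=
  if u ∈ s then a else if T.Adj u (des T s u) ∧ a = some 0 then some 1 else none

variable {T s}

lemma adj_iff_des_eq_of_notMem (hT : T.IsAcyclic) (hconn : (T.induce s).Preconnected)
    {u : V} (hu : u ∉ s) (r : s) : T.Adj u r ↔ T.Adj u (des T s u) ∧ des T s u = r := by
  refine ⟨fun hur => ?_, fun ⟨hadj, hdes⟩ => hdes ▸ hadj⟩
  have hadj : T.Adj u (des T s u) := by
    rw [des, dif_neg hu]
    exact Classical.epsilon_spec (p := fun x : s => T.Adj u x) ⟨r, hur⟩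
  exact ⟨hadj, Subtype.ext <|
    hT.eq_of_adj_of_preconnected_induce hconn hu (des T s u).2 r.2 hadj hur⟩

lemma decodeAns1_ans1_des [Fintype V] [Fintype s] (hT : T.IsAcyclic)
    (hconn : (T.induce s).Preconnected) (u : V) (r : s) :
    decodeAns1 T s u (ans1 (T.induce s) (des T s u) r) = ans1 T u r := by
  rw [decodeAns1, ans1_induce]
  by_cases hu : u ∈ s
  · rw [if_pos hu, des, dif_pos hu]
  · have hur : u ≠ r := fun h => hu (h ▸ r.2)
    have hans : ans1 T u r = if T.Adj u r then some 1 else none := by simp only [ans1, if_neg hur]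
    rw [if_neg hu, hans]
    refine if_congr ?_ rfl rfl
    rw [ans1_eq_zero_iff, adj_iff_des_eq_of_notMem hT hconn hu r, Subtype.ext_iff]

end Subtree

theorem zeta1_subtree_le_general [Fintype V] (T : SimpleGraph V) (hT : T.IsTree)
    (s : Finset V)
    (hconn : (T.induce (↑s : Set V)).Connected) :
    zeta1 (T.induce (↑s : Set V)) ≤ zeta1 T := by
  have := hconn.nonempty
  exact locNum_le_of_simulation (SimpleGraph.Embedding.induce (G := T) _).toHom
    (SimpleGraph.Embedding.induce (G := T) _).injective
    (decodeAns1_ans1_des hT.isAcyclic hconn.preconnected) ⟨_, _, winsLoc_ans1_probe_all T⟩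

/-- For a subtree `S` of a tree `T`, `ζ₁(S) ≤ ζ₁(T)`. -/
theorem zeta1_subtree_le [Fintype V] (T : SimpleGraph V) (hT : T.IsTree)
    (s : Finset V) (hs : s.Nonempty)
    (hconn : (T.induce (↑s : Set V)).Connected) :
    zeta1 (T.induce (↑s : Set V)) ≤ zeta1 T :=
  zeta1_subtree_le_general T hT s hconn
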